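/- The set of f ∈ X predicted by a single X-predictor π, when g converges to infinity, maps under the Cantor expansion to a strongly porous subset of [0,1]. -/

import Mathlib

open Set Filter

/-- An X-predictor for X = ∏ₙ g(n): an infinite set D of coordinates together
with, for each n, a guessing function depending on the first n values. -/
structure Predictor (g : ℕ → ℕ) where
  D : Set ℕ
  infinite : D.Infinite
  pred : (n : ℕ) → ((k : Fin n) → ℕ) → ℕ
  bound : ∀ (n : ℕ) (x : (k : Fin n) → ℕ), (∀ k, x k < g k.val) → pred n x < g n

/-- π predicts f iff πₙ(f↾n) = f(n) for all but finitely many n ∈ D. -/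
def Predicts {g : ℕ → ℕ} (π : Predictor g) (f : ℕ → ℕ) : Prop :=
  {n | n ∈ π.D ∧ π.pred n (fun k => f k.val) ≠ f n}.Finite

/-- The space X = ∏ₙ {0,…,g(n)−1}, as a set of functions ℕ → ℕ. -/
def Xspace (g : ℕ → ℕ) : Set (ℕ → ℕ) := {f | ∀ n, f n < g n}

/-- The ideal ℐ_X of sets covered by countably many predictors. -/
def predIdeal (g : ℕ → ℕ) : Set (Set (ℕ → ℕ)) :=
  {A | A ⊆ Xspace g ∧
    ∃ Ps : Set (Predictor g), Ps.Countable ∧ ∀ f ∈ A, ∃ π ∈ Ps, Predicts π f}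

open Set Filter

/-- λ(A,(a,b)): supremum of lengths of open subintervals of (a,b) disjoint from A. -/
noncomputable def lamGap (A : Set ℝ) (a b : ℝ) : ℝ :=
  sSup {l : ℝ | 0 ≤ l ∧ ∃ c, a ≤ c ∧ c + l ≤ b ∧ Set.Ioo c (c + l) ∩ A = ∅}

/-- λ*(A,(c,d)): supremum of δ ≥ 0 such that (c,c+δ) ∪ (d−δ,d) is disjoint from A. -/
noncomputable def lamSym (A : Set ℝ) (c d : ℝ) : ℝ :=
  sSup {δ : ℝ | 0 ≤ δ ∧ (Set.Ioo c (c + δ) ∪ Set.Ioo (d - δ) d) ∩ A = ∅}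

/-- porosity p(A,r) -/
noncomputable def por (A : Set ℝ) (r : ℝ) : ℝ :=
  Filter.limsup (fun ε => lamGap A (r - ε) (r + ε) / ε) (nhdsWithin 0 (Set.Ioi 0))

/-- symmetric porosity s(A,r) -/
noncomputable def spor (A : Set ℝ) (r : ℝ) : ℝ :=
  Filter.limsup (fun ε => lamSym A (r - ε) (r + ε) / ε) (nhdsWithin 0 (Set.Ioi 0))

def Porous (A : Set ℝ) : Prop := ∀ a ∈ A, 0 < por A a
def StronglyPorous (A : Set ℝ) : Prop := ∀ a ∈ A, por A a = 1
def SymPorous (A : Set ℝ) : Prop := ∀ a ∈ A, 0 < spor A a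
def StronglySymPorous (A : Set ℝ) : Prop := ∀ a ∈ A, spor A a = 1

/-- The σ-ideal on [0,1] generated by the sets (⊆ [0,1]) satisfying P. -/
def sigmaIdeal (P : Set ℝ → Prop) : Set (Set ℝ) :=
  {A | A ⊆ Set.Icc 0 1 ∧
    ∃ f : ℕ → Set ℝ, (∀ n, P (f n) ∧ f n ⊆ Set.Icc 0 1) ∧ A ⊆ ⋃ n, f n}

noncomputable def cantorMap (g : ℕ → ℕ) (f : ℕ → ℕ) : ℝ :=
  ∑' n, (f n : ℝ) / ∏ k ∈ Finset.range (n + 1), (g k : ℝ)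


/-! The image of `A_m(π)` is confined, inside the level-`n` cylinder of any of its points `φ f`
with `n ∈ D_π`, `n ≥ m`, to the single subcylinder of level `n + 1` fixed by the prediction
`πₙ(f↾n) = f n`: two elements of `A_m(π)` that agree below `n` agree at `n`. Of the two gaps this
leaves in the cylinder of length `L`, the larger has length at least `(L - L / g n) / 2` and lies
within `L / g n` of `φ f`, so along `D_π` the relative gap size tends to `1` as `g n → ∞`. -/

open Topology

lemma le_lamGap_of_Ioo {A : Set ℝ} {a b c d : ℝ} (hac : a ≤ c) (hcd : c ≤ d) (hdb : d ≤ b)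
    (hA : ∀ y ∈ Ioo c d, y ∉ A) : d - c ≤ lamGap A a b := by
  refine le_csSup ⟨b - a, ?_⟩ ⟨by linarith, c, hac, by linarith, ?_⟩
  · rintro l ⟨-, e, hae, heb, -⟩
    linarith
  · rw [add_sub_cancel, eq_empty_iff_forall_notMem]
    exact fun y ⟨hy, hyA⟩ => hA y hy hyA

lemma lamGap_le_of_mem {A : Set ℝ} {a ε : ℝ} (ha : a ∈ A) (hε : 0 ≤ ε) :
    lamGap A (a - ε) (a + ε) ≤ ε := by
  refine csSup_le ⟨0, le_rfl, a - ε, le_rfl, by linarith, by simp⟩ ?_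
  rintro l ⟨-, c, hac, hcb, hdisj⟩
  by_contra! hlt
  have hcal : c < a ∧ a < c + l := ⟨by linarith, by linarith⟩
  exact (eq_empty_iff_forall_notMem.mp hdisj) a ⟨hcal, ha⟩

lemma Filter.limsup_eq_of_eventually_le_of_frequently_ge {α : Type*} {l : Filter α}
    {u : α → ℝ} {b : ℝ} (hle : ∀ᶠ x in l, u x ≤ b) (hge : ∀ δ > 0, ∃ᶠ x in l, b - δ ≤ u x) :
    limsup u l = b := by
  have hcobdd : IsCoboundedUnder (· ≤ ·) l u := .of_frequently_ge (hge 1 one_pos)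
  refine le_antisymm (limsup_le_of_le hcobdd hle) (le_of_forall_sub_le fun δ hδ => ?_)
  exact le_limsup_of_frequently_le (hge δ hδ) ⟨b, hle⟩

/-- The radius `ε` is the distance from `a` to the far end of the larger of the two gaps
`(c, s)`, `(s + w, c + L)`. -/
lemma exists_lamGap_ge_of_confined {A : Set ℝ} {a c L s w : ℝ} (hcs : c ≤ s)
    (hsL : s + w ≤ c + L) (ha : a ∈ Icc s (s + w)) (hA : A ∩ Ioo c (c + L) ⊆ Icc s (s + w)) :
    ∃ ε, (L - w) / 2 ≤ ε ∧ ε ≤ L ∧ ε - w ≤ lamGap A (a - ε) (a + ε) := by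
  obtain ⟨has, haw⟩ := ha
  rcases le_total (s - c) (c + L - (s + w)) with hright | hleft
  · refine ⟨c + L - a, by linarith, by linarith, ?_⟩
    refine le_trans ?_ (le_lamGap_of_Ioo (c := s + w) (d := c + L) ?_ hsL ?_ ?_) <;> try linarith
    exact fun y hy hyA => (hA ⟨hyA, by linarith [hy.1], hy.2⟩).2.not_gt hy.1
  · refine ⟨a - c, by linarith, by linarith, ?_⟩
    refine le_trans ?_ (le_lamGap_of_Ioo (c := c) (d := s) ?_ hcs ?_ ?_) <;> try linarith
    exact fun y hy hyA => (hA ⟨hyA, hy.1, by linarith [hy.2]⟩).1.not_gt hy.2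

lemma por_eq_one_of_confined {A : Set ℝ} {a : ℝ} (ha : a ∈ A)
    (hconf : ∀ η > 0, ∀ δ > 0, ∃ c L s w : ℝ, 0 < L ∧ L < η ∧ w ≤ δ * L ∧ c ≤ s ∧
      s + w ≤ c + L ∧ a ∈ Icc s (s + w) ∧ A ∩ Ioo c (c + L) ⊆ Icc s (s + w)) :
    por A a = 1 := by
  refine Filter.limsup_eq_of_eventually_le_of_frequently_ge ?_ fun δ hδ => ?_
  · filter_upwards [self_mem_nhdsWithin] with ε (hε : 0 < ε)
    rw [div_le_one hε]
    exact lamGap_le_of_mem ha hε.le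
  rw [(nhdsGT_basis 0).frequently_iff]
  intro η hη
  obtain ⟨c, L, s, w, hL, hLη, hwL, hcs, hsL, has, hA⟩ :=
    hconf η hη (δ / (2 + δ)) (by positivity)
  obtain ⟨ε, hLε, hεL, hgap⟩ := exists_lamGap_ge_of_confined hcs hsL has hA
  have hw : 2 * w ≤ δ * (L - w) := by
    rw [div_mul_eq_mul_div, le_div_iff₀ (by positivity)] at hwL
    linarith
  have hw0 : 0 ≤ w := by linarith [has.1, has.2]
  have hε : 0 < ε := by nlinarith
  refine ⟨ε, ⟨hε, hεL.trans_lt hLη⟩, ?_⟩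
  rw [le_div_iff₀ hε]
  nlinarith

/-- The length of a level-`n` cylinder of the expansion. -/
noncomputable def cylinderLength (g : ℕ → ℕ) (n : ℕ) : ℝ :=
  (∏ k ∈ Finset.range n, (g k : ℝ))⁻¹

/-- The left endpoint of the level-`n` cylinder containing `cantorMap g f`. -/
noncomputable def cylinderStart (g f : ℕ → ℕ) (n : ℕ) : ℝ :=
  ∑ k ∈ Finset.range n, (f k : ℝ) * cylinderLength g (k + 1)

section Cylinders

variable {g f h : ℕ → ℕ}

lemma cylinderLength_zero : cylinderLength g 0 = 1 := by
  simp [cylinderLength]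

lemma cylinderLength_succ (n : ℕ) : cylinderLength g (n + 1) = cylinderLength g n / g n := by
  rw [cylinderLength, cylinderLength, Finset.prod_range_succ, mul_inv, div_eq_mul_inv]

lemma cylinderLength_nonneg (n : ℕ) : 0 ≤ cylinderLength g n := by
  unfold cylinderLength
  positivity

lemma cylinderLength_pos (hg : ∀ k, 0 < g k) (n : ℕ) : 0 < cylinderLength g n := by
  unfold cylinderLength
  exact inv_pos.2 (Finset.prod_pos fun k _ => Nat.cast_pos.2 (hg k))

lemma tendsto_cylinderLength (hg : ∀ k, 0 < g k) (hginf : Tendsto g atTop atTop) :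
    Tendsto (cylinderLength g) atTop (𝓝 0) := by
  have hle_one : ∀ n, cylinderLength g n ≤ 1 := by
    refine fun n =>
      (antitone_nat_of_succ_le (fun n => ?_) (Nat.zero_le n)).trans_eq cylinderLength_zero
    rw [cylinderLength_succ]
    exact div_le_self (cylinderLength_nonneg n) (Nat.one_le_cast.2 (hg n))
  refine (tendsto_add_atTop_iff_nat 1).1 <| squeeze_zero (fun n => cylinderLength_nonneg _)
    (fun n => ?_) (tendsto_inv_atTop_zero.comp (tendsto_natCast_atTop_atTop.comp hginf))
  rw [cylinderLength_succ, div_eq_mul_inv]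
  exact mul_le_of_le_one_left (by positivity) (hle_one n)

lemma cylinderStart_succ (n : ℕ) :
    cylinderStart g f (n + 1) = cylinderStart g f n + f n * cylinderLength g (n + 1) :=
  Finset.sum_range_succ _ _

lemma cylinderStart_congr {n : ℕ} (hfh : ∀ k < n, h k = f k) :
    cylinderStart g h n = cylinderStart g f n :=
  Finset.sum_congr rfl fun k hk => by rw [hfh k (Finset.mem_range.1 hk)]

lemma cylinderStart_mono : Monotone (cylinderStart g f) :=
  monotone_nat_of_le_succ fun n => by
    rw [cylinderStart_succ]
    exact le_add_of_nonneg_right (by have := cylinderLength_nonneg (g := g) (n + 1); positivity)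

lemma cylinderStart_succ_add_le {n : ℕ} (hf : f n < g n) :
    cylinderStart g f (n + 1) + cylinderLength g (n + 1) ≤
      cylinderStart g f n + cylinderLength g n := by
  have hfg : (f n : ℝ) + 1 ≤ g n := by exact_mod_cast hf
  have hg : (0 : ℝ) < g n := by exact_mod_cast (Nat.zero_le _).trans_lt hf
  rw [cylinderStart_succ, cylinderLength_succ, add_assoc, ← add_one_mul, mul_div_assoc']
  gcongr
  rw [div_le_iff₀ hg, mul_comm (cylinderLength g n)]
  exact mul_le_mul_of_nonneg_right hfg (cylinderLength_nonneg n)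

lemma cylinderStart_add_cylinderLength_antitone (hf : f ∈ Xspace g) :
    Antitone fun n => cylinderStart g f n + cylinderLength g n :=
  antitone_nat_of_succ_le fun n => cylinderStart_succ_add_le (hf n)

lemma tendsto_cylinderStart_cantorMap (hf : f ∈ Xspace g) :
    Tendsto (cylinderStart g f) atTop (𝓝 (cantorMap g f)) := by
  have hsum : Summable fun n => (f n : ℝ) * cylinderLength g (n + 1) := by
    refine summable_of_sum_range_le (c := 1)
      (fun n => mul_nonneg (Nat.cast_nonneg _) (cylinderLength_nonneg _)) fun n => ?_
    calc cylinderStart g f n ≤ cylinderStart g f n + cylinderLength g n :=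
          le_add_of_nonneg_right (cylinderLength_nonneg n)
      _ ≤ cylinderStart g f 0 + cylinderLength g 0 :=
          cylinderStart_add_cylinderLength_antitone hf (Nat.zero_le n)
      _ = 1 := by simp [cylinderStart, cylinderLength_zero]
  have hmap : cantorMap g f = ∑' n, (f n : ℝ) * cylinderLength g (n + 1) := by
    simp only [cantorMap, cylinderLength, div_eq_mul_inv]
  rw [hmap]
  exact hsum.hasSum.tendsto_sum_nat

lemma cantorMap_mem_cylinder (hf : f ∈ Xspace g) (n : ℕ) :
    cantorMap g f ∈ Icc (cylinderStart g f n) (cylinderStart g f n + cylinderLength g n) := by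
  have hlim := tendsto_cylinderStart_cantorMap hf
  refine ⟨cylinderStart_mono.ge_of_tendsto hlim n, le_of_tendsto hlim ?_⟩
  filter_upwards [eventually_ge_atTop n] with k hk
  exact (le_add_of_nonneg_right (cylinderLength_nonneg k)).trans
    (cylinderStart_add_cylinderLength_antitone hf hk)

lemma cantorMap_notMem_Ioo_cylinder (hf : f ∈ Xspace g) (hh : h ∈ Xspace g) {n : ℕ}
    (hne : ∃ k < n, h k ≠ f k) :
    cantorMap g h ∉ Ioo (cylinderStart g f n) (cylinderStart g f n + cylinderLength g n) := by
  induction n with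
  | zero => simp at hne
  | succ n ih =>
    by_cases hpre : ∃ k < n, h k ≠ f k
    · exact fun ⟨h₁, h₂⟩ => ih hpre ⟨(cylinderStart_mono n.le_succ).trans_lt h₁,
        h₂.trans_le (cylinderStart_succ_add_le (hf n))⟩
    push Not at hpre
    have hn : h n ≠ f n := by
      obtain ⟨k, hk, hkne⟩ := hne
      obtain rfl : k = n := by by_contra hkn; exact hkne (hpre k (by omega))
      exact hkne
    obtain ⟨hlo, hhi⟩ := cantorMap_mem_cylinder hh (n + 1)
    rw [cylinderStart_succ, cylinderStart_congr hpre] at hlo hhi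
    rw [cylinderStart_succ]
    have hL := cylinderLength_nonneg (g := g) (n + 1)
    rintro ⟨h₁, h₂⟩
    rcases hn.lt_or_gt with hlt | hgt
    · have : (h n : ℝ) + 1 ≤ f n := by exact_mod_cast hlt
      nlinarith
    · have : (f n : ℝ) + 1 ≤ h n := by exact_mod_cast hgt
      nlinarith

end Cylinders

/-- The set `A_m(π)` of points of `X` predicted correctly by `π` at every `n ∈ D_π` with `n ≥ m`. -/
def Predictor.predictedFrom {g : ℕ → ℕ} (π : Predictor g) (m : ℕ) : Set (ℕ → ℕ) :=
  {f | f ∈ Xspace g ∧ ∀ n ∈ π.D, m ≤ n → π.pred n (fun k => f k.val) = f n}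

lemma Predictor.cantorMap_mem_cylinder_succ {g f h : ℕ → ℕ} {π : Predictor g} {m n : ℕ}
    (hf : f ∈ π.predictedFrom m) (hh : h ∈ π.predictedFrom m) (hnD : n ∈ π.D) (hmn : m ≤ n)
    (hφ : cantorMap g h ∈ Ioo (cylinderStart g f n) (cylinderStart g f n + cylinderLength g n)) :
    cantorMap g h ∈
      Icc (cylinderStart g f (n + 1)) (cylinderStart g f (n + 1) + cylinderLength g (n + 1)) := by
  have hpre : ∀ k < n, h k = f k := by
    by_contra! hne
    exact cantorMap_notMem_Ioo_cylinder hf.1 hh.1 hne hφ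
  have hn : h n = f n := by
    rw [← hh.2 n hnD hmn, ← hf.2 n hnD hmn]
    congr 1
    exact funext fun k => hpre k k.isLt
  have hpre' : ∀ k < n + 1, h k = f k := fun k hk =>
    (Nat.lt_succ_iff_lt_or_eq.1 hk).elim (hpre k) fun hkn => hkn ▸ hn
  rw [← cylinderStart_congr hpre']
  exact cantorMap_mem_cylinder hh.1 (n + 1)

theorem predicted_set_image_strongly_porous_general (g : ℕ → ℕ)
    (hginf : Filter.Tendsto g Filter.atTop Filter.atTop)
    (π : Predictor g) (m : ℕ) :
    StronglyPorous (cantorMap g ''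
      {f | f ∈ Xspace g ∧
        ∀ n ∈ π.D, m ≤ n → π.pred n (fun k => f k.val) = f n}) := by
  change StronglyPorous (cantorMap g '' π.predictedFrom m)
  rintro _ ⟨f, hf, rfl⟩
  have hg : ∀ k, 0 < g k := fun k => (Nat.zero_le _).trans_lt (hf.1 k)
  refine por_eq_one_of_confined ⟨f, hf, rfl⟩ fun η hη δ hδ => ?_
  have hsmall : ∀ᶠ n in atTop, m ≤ n ∧ cylinderLength g n < η ∧ (g n : ℝ)⁻¹ ≤ δ :=
    (eventually_ge_atTop m).and <|
      ((tendsto_cylinderLength hg hginf).eventually (gt_mem_nhds hη)).and <|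
      (tendsto_inv_atTop_zero.comp (tendsto_natCast_atTop_atTop.comp hginf)).eventually
        (ge_mem_nhds hδ)
  obtain ⟨n, hnD, hmn, hLη, hgδ⟩ :=
    ((Nat.frequently_atTop_iff_infinite.2 π.infinite).and_eventually hsmall).exists
  refine ⟨cylinderStart g f n, cylinderLength g n, cylinderStart g f (n + 1),
    cylinderLength g (n + 1), cylinderLength_pos hg n, hLη, ?_, cylinderStart_mono n.le_succ,
    cylinderStart_succ_add_le (hf.1 n), cantorMap_mem_cylinder hf.1 (n + 1), ?_⟩
  · rw [cylinderLength_succ, div_eq_inv_mul]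
    exact mul_le_mul_of_nonneg_right hgδ (cylinderLength_nonneg n)
  · rintro _ ⟨⟨h, hh, rfl⟩, hφ⟩
    exact π.cantorMap_mem_cylinder_succ hf hh hnD hmn hφ

/-- the set of f predicted by π from stage m onwards maps to a
strongly porous subset of [0,1]. -/
theorem predicted_set_image_strongly_porous (g : ℕ → ℕ) (hg : ∀ n, 2 ≤ g n)
    (hginf : Filter.Tendsto g Filter.atTop Filter.atTop)
    (π : Predictor g) (m : ℕ) :
    StronglyPorous (cantorMap g ''
      {f | f ∈ Xspace g ∧
        ∀ n ∈ π.D, m ≤ n → π.pred n (fun k => f k.val) = f n}) :=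
  predicted_set_image_strongly_porous_general g hginf π m
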